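/- arXiv:0904.1823 — 6 statements merged into one kernel-verified Lean document; each statement's English description precedes it below -/
import Mathlib

section
/- A strict partition is uniquely determined by its Kerov interlacing coordinates: if λ and μ are strict partitions with X(λ) \ {0} = X(μ) \ {0} and Y(λ) = Y(μ), then λ = μ. -/
open Finset

/-- A strict partition is encoded as the finite set of its (distinct, positive) parts:
`S` is a strict partition iff `0 ∉ S`. -/
def IsStrictPartition (S : Finset ℕ) : Prop := 0 ∉ S

/-- The weight `|λ|` of a strict partition: the sum of its parts. -/
def wt (S : Finset ℕ) : ℕ := ∑ a ∈ S, a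

/-- The length `ℓ(λ)` of a strict partition: its number of parts. -/
def len (S : Finset ℕ) : ℕ := S.card

/-- The set `X(λ)` of addable contents of the strict partition `λ`:
the contents `x` of boxes that can be added to the shifted Young diagram.
A part `a ∈ S` gives the addable content `a` iff `a + 1` is not a part, and `0` is an
addable content iff `1` is not a part (i.e. `λ` is empty or its smallest part is `≥ 2`). -/
def Xset (S : Finset ℕ) : Finset ℕ :=
  (S.filter (fun x => x + 1 ∉ S)) ∪ (if 1 ∉ S then {0} else ∅)

/-- The set `Y(λ)` of removable contents of the strict partition `λ`:
`y ∈ Y(λ)` iff `y + 1` is a part and `y` is not a part. -/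
def Yset (S : Finset ℕ) : Finset ℕ :=
  (S.filter (fun p => p - 1 ∉ S)).image (fun p => p - 1)

/-- `λ + □(x)`: add to `λ` the box of content `x ∈ X(λ)`. -/
def addBox (S : Finset ℕ) (x : ℕ) : Finset ℕ :=
  if x = 0 then insert 1 S else insert (x + 1) (S.erase x)

/-- `λ − □(y)`: remove from `λ` the box of content `y ∈ Y(λ)`. -/
def removeBox (S : Finset ℕ) (y : ℕ) : Finset ℕ :=
  if y = 0 then S.erase 1 else insert y (S.erase (y + 1))

/-- `c(c+1)` as a real number. -/
def cc (t : ℕ) : ℝ := t * (t + 1)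

/-- The number `h(λ)` of standard shifted tableaux (with the doubled-edge convention):
`h(λ) = 2^{|λ|−ℓ(λ)} |λ|!/(λ_1!⋯λ_ℓ!) ∏_{i<j} (λ_i−λ_j)/(λ_i+λ_j)`. -/
noncomputable def hfun (S : Finset ℕ) : ℝ :=
  2 ^ (wt S - len S) * (Nat.factorial (wt S) : ℝ) / (∏ a ∈ S, (Nat.factorial a : ℝ)) *
    ∏ p ∈ S.offDiag.filter (fun p => p.2 < p.1), (((p.1 : ℝ) - p.2) / ((p.1 : ℝ) + p.2))

/-- The partial fraction coefficients `θ↑_x(λ)`, `x ∈ X(λ)`. -/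
noncomputable def thetaUp (S : Finset ℕ) (xh : ℕ) : ℝ :=
  if xh = 0 then (∏ y ∈ Yset S, cc y) / (∏ x ∈ (Xset S).erase 0, cc x)
  else (∏ y ∈ Yset S, (cc xh - cc y)) /
    (cc xh * ∏ x ∈ ((Xset S).erase 0).erase xh, (cc xh - cc x))

/-- The partial fraction coefficients `θ↓_y(λ)`, `y ∈ Y(λ)`. -/
noncomputable def thetaDown (S : Finset ℕ) (yh : ℕ) : ℝ :=
  (∏ x ∈ (Xset S).erase 0, (cc yh - cc x)) / (∏ y ∈ (Yset S).erase yh, (cc yh - cc y))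

/-- `Z_α(n) = α(α+2)⋯(α+2n−2)`. -/
noncomputable def Zfun (α : ℝ) (n : ℕ) : ℝ := ∏ k ∈ Finset.range n, (α + 2 * k)

/-- The multiplicative measure weight
`M_n^α(λ) = (h(λ)² 2^{ℓ−n}/n!) ⬝ ∏_{□∈λ}(c(□)(c(□)+1)+α) / Z_α(n)`. -/
noncomputable def Mw (α : ℝ) (n : ℕ) (S : Finset ℕ) : ℝ :=
  hfun S ^ 2 * 2 ^ len S / 2 ^ n / (Nat.factorial n : ℝ) *
    (∏ p ∈ S, ∏ c ∈ Finset.range p, (cc c + α)) / Zfun α n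

/-!
Whether `n` is a part of `λ` is determined by whether `n + 1` is a part together with
`X(λ) \ {0}` and `Y(λ)`: if `n + 1` is not a part, then `n` is a part iff `n ∈ X(λ)`; if it is,
then `n` is a part iff `n ∉ Y(λ)`. Hence there is no largest integer that is a part of exactly
one of `λ` and `μ`.
-/

theorem Finset.eq_of_mem_iff_of_mem_succ_iff {S T : Finset ℕ}
    (h : ∀ n, (n + 1 ∈ S ↔ n + 1 ∈ T) → (n ∈ S ↔ n ∈ T)) : S = T := by
  by_contra hne
  have hD : (symmDiff S T).Nonempty := symmDiff_nonempty.2 hne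
  set m := (symmDiff S T).max' hD
  have hm : m ∈ symmDiff S T := max'_mem _ hD
  have hsucc : m + 1 ∉ symmDiff S T := fun hmem => (Nat.lt_succ_self m).not_ge (le_max' _ _ hmem)
  rw [mem_symmDiff] at hm hsucc
  have := h m (by tauto)
  tauto

namespace IsStrictPartition

variable {S : Finset ℕ}

theorem erase_zero_Xset (hS : IsStrictPartition S) :
    (Xset S).erase 0 = S.filter (fun a => a + 1 ∉ S) := by
  ext n
  have hn0 : n ∈ S → n ≠ 0 := fun h h0 => hS (h0 ▸ h)
  by_cases h1 : 1 ∈ S <;>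
    simp only [Xset, h1, not_true, not_false_iff, if_false, if_true, mem_erase, mem_union,
      mem_filter, mem_singleton, notMem_empty] <;>
    tauto

theorem mem_Yset_iff (hS : IsStrictPartition S) (n : ℕ) :
    n ∈ Yset S ↔ n + 1 ∈ S ∧ n ∉ S := by
  simp only [Yset, mem_image, mem_filter]
  constructor
  · rintro ⟨p, ⟨hp, hp'⟩, rfl⟩
    obtain ⟨k, rfl⟩ : ∃ k, p = k + 1 := Nat.exists_eq_succ_of_ne_zero fun h => hS (h ▸ hp)
    exact ⟨hp, hp'⟩
  · rintro ⟨h1, h2⟩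
    exact ⟨n + 1, ⟨h1, h2⟩, rfl⟩

theorem mem_iff (hS : IsStrictPartition S) (n : ℕ) :
    n ∈ S ↔ n ∈ (Xset S).erase 0 ∨ (n + 1 ∈ S ∧ n ∉ Yset S) := by
  rw [hS.erase_zero_Xset, mem_filter, hS.mem_Yset_iff]
  tauto

end IsStrictPartition

/-- **A strict partition is uniquely determined by its Kerov interlacing coordinates:**
if `X(λ) \ {0} = X(μ) \ {0}` and `Y(λ) = Y(μ)` then `λ = μ`. -/
theorem kerov_coordinates_determine (S T : Finset ℕ)
    (hS : IsStrictPartition S) (hT : IsStrictPartition T)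
    (hX : (Xset S).erase 0 = (Xset T).erase 0) (hY : Yset S = Yset T) :
    S = T :=
  Finset.eq_of_mem_iff_of_mem_succ_iff fun n hsucc => by
    rw [hS.mem_iff, hT.mem_iff, hX, hY, hsucc]
end

section
/- For every strict partition λ: Σ_{x ∈ X(λ)} x(x+1) − Σ_{y ∈ Y(λ)} y(y+1) = 2|λ|. -/
open Finset

/-! Writing `T = {b | b + 1 ∈ λ}` for the parts of `λ` shifted down by one, the nonzero
addable contents are `λ \ T` and the removable contents are `T \ λ`. Hence for any `f` with
`f 0 = 0` the difference of the sums of `f` over `X(λ)` and `Y(λ)` telescopes to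
`∑_{a ∈ λ} (f a - f (a - 1))`, and for `f c = c (c + 1)` each term equals `2 a`. -/

section ContentSums

variable {S : Finset ℕ}

lemma mem_image_pred_iff (hS : 0 ∉ S) {b : ℕ} : b ∈ S.image (· - 1) ↔ b + 1 ∈ S := by
  refine ⟨fun h => ?_, fun h => mem_image.2 ⟨b + 1, h, rfl⟩⟩
  obtain ⟨a, ha, rfl⟩ := mem_image.1 h
  rwa [Nat.sub_add_cancel (Nat.one_le_iff_ne_zero.2 (ne_of_mem_of_not_mem ha hS))]

lemma filter_succ_notMem_eq_sdiff (hS : 0 ∉ S) :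
    S.filter (fun x => x + 1 ∉ S) = S \ S.image (· - 1) := by
  ext a
  simp [mem_image_pred_iff hS]

lemma Yset_eq_image_pred_sdiff (hS : 0 ∉ S) : Yset S = S.image (· - 1) \ S := by
  ext b
  simp only [Yset, mem_sdiff, mem_image, mem_filter, mem_image_pred_iff hS]
  constructor
  · rintro ⟨a, ⟨ha, ha'⟩, rfl⟩
    rw [Nat.sub_add_cancel (Nat.one_le_iff_ne_zero.2 (ne_of_mem_of_not_mem ha hS))]
    exact ⟨ha, ha'⟩
  · rintro ⟨hb, hb'⟩
    exact ⟨b + 1, ⟨hb, hb'⟩, rfl⟩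

variable {G : Type*} [AddCommMonoid G] (f : ℕ → G)

lemma sum_image_pred (hS : 0 ∉ S) :
    ∑ b ∈ S.image (· - 1), f b = ∑ a ∈ S, f (a - 1) := by
  refine sum_image fun a ha b hb hab => ?_
  have := ne_of_mem_of_not_mem ha hS
  have := ne_of_mem_of_not_mem hb hS
  omega

lemma sum_Xset_eq_sum_sdiff (hS : 0 ∉ S) (hf : f 0 = 0) :
    ∑ x ∈ Xset S, f x = ∑ a ∈ S \ S.image (· - 1), f a := by
  rw [← filter_succ_notMem_eq_sdiff hS, Xset]
  refine (sum_subset subset_union_left fun x hx hx' => ?_).symm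
  have hx0 : x ∈ (if 1 ∉ S then {0} else ∅ : Finset ℕ) := (mem_union.1 hx).resolve_left hx'
  have : x = 0 := by split_ifs at hx0 <;> simp_all
  rw [this, hf]

lemma sum_Xset_sub_sum_Yset {G : Type*} [AddCommGroup G] (f : ℕ → G) (hS : 0 ∉ S) (hf : f 0 = 0) :
    ∑ x ∈ Xset S, f x - ∑ y ∈ Yset S, f y = ∑ a ∈ S, (f a - f (a - 1)) := by
  rw [sum_Xset_eq_sum_sdiff f hS hf, Yset_eq_image_pred_sdiff hS, sum_sdiff_sub_sum_sdiff,
    sum_image_pred f hS, sum_sub_distrib]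

end ContentSums

lemma mul_add_one_sub_pred_mul_add_one {a : ℕ} (ha : a ≠ 0) :
    (a : ℤ) * (a + 1) - ((a - 1 : ℕ) : ℤ) * ((a - 1 : ℕ) + 1) = 2 * a := by
  rw [Nat.cast_pred (Nat.pos_of_ne_zero ha)]
  ring

/-- **Proposition 1.5.** For every strict partition `λ`:
`∑_{x ∈ X(λ)} x(x+1) − ∑_{y ∈ Y(λ)} y(y+1) = 2|λ|`. -/
theorem kerov_sum_identity (S : Finset ℕ) (hS : IsStrictPartition S) :
    (∑ x ∈ Xset S, (x : ℤ) * (x + 1)) - (∑ y ∈ Yset S, (y : ℤ) * (y + 1)) =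
      2 * (wt S : ℤ) := by
  rw [sum_Xset_sub_sum_Yset (fun c : ℕ => (c : ℤ) * (c + 1)) hS (by simp),
    sum_congr rfl fun a ha => mul_add_one_sub_pred_mul_add_one (ne_of_mem_of_not_mem ha hS), ← mul_sum,
    wt, Nat.cast_sum]
end

section
/- For every strict partition λ of weight n and every x̂ ∈ X(λ): θ↑_{x̂}(λ) = h(λ+□(x̂)) / (h(λ) · (n+1)). That is, the partial-fraction coefficients θ↑ coincide with the Plancherel up transition probabilities of the Schur graph. -/
open Finset

/-!
Write `c(t) = t(t+1)` and identify `λ` with its set of parts. The contents interlace: the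
multisets `X'(λ) ∪ {b - 1 : b ∈ λ}` and `λ ∪ Y(λ)` coincide. This turns `θ↑_a(λ)` into
`2/(a+1) ∏_{b ≠ a} (c(a) - c(b-1)) / (c(a) - c(b))` and `θ↑_0(λ)` into `∏_b c(b-1) / c(b)`.
Inserting a part `a` multiplies `h` by `2^{a-1} binom(|λ|+a, a) ∏_b |a-b|/(a+b)`, so
`h(λ+□(x̂)) / h(λ)` is a product of the same shape, and the two agree factor by factor because
`|a+1-b|/(a+1+b) · (c(a) - c(b)) = |a-b|/(a+b) · (c(a) - c(b-1))`.
-/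

lemma cc_strictMono : StrictMono cc := by
  intro s t hst
  have : (s : ℝ) < t := by exact_mod_cast hst
  unfold cc
  nlinarith [(Nat.cast_nonneg s : (0 : ℝ) ≤ s)]

lemma cc_zero : cc 0 = 0 := by simp [cc]

lemma cc_ne_zero {t : ℕ} (ht : t ≠ 0) : cc t ≠ 0 := by
  rw [← cc_zero]
  exact cc_strictMono.injective.ne ht

lemma cc_sub_cc_ne_zero {s t : ℕ} (hst : s ≠ t) : cc s - cc t ≠ 0 :=
  sub_ne_zero.2 (cc_strictMono.injective.ne hst)

lemma cc_sub_cc_pred {a : ℕ} (ha : a ≠ 0) : cc a - cc (a - 1) = 2 * a := by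
  unfold cc
  rw [Nat.cast_pred (Nat.pos_of_ne_zero ha)]
  ring

section Contents

variable {S : Finset ℕ}

lemma mem_Xset {x : ℕ} : x ∈ Xset S ↔ (x ∈ S ∧ x + 1 ∉ S) ∨ (x = 0 ∧ 1 ∉ S) := by
  by_cases h1 : 1 ∈ S <;> simp [Xset, h1, or_comm]

lemma Xset_erase_zero (hS : 0 ∉ S) : (Xset S).erase 0 = S.filter (fun x => x + 1 ∉ S) := by
  ext x
  simp only [mem_erase, mem_Xset, mem_filter]
  constructor
  · rintro ⟨hx0, h | ⟨rfl, -⟩⟩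
    exacts [h, absurd rfl hx0]
  · rintro h
    exact ⟨ne_of_mem_of_not_mem h.1 hS, Or.inl h⟩

lemma notMem_of_mem_Yset {y : ℕ} (hy : y ∈ Yset S) : y ∉ S := by
  obtain ⟨p, hp, rfl⟩ := mem_image.1 hy
  exact (mem_filter.1 hp).2

variable {M : Type*} [CommMonoid M]

lemma prod_Yset (hS : 0 ∉ S) (g : ℕ → M) :
    ∏ y ∈ Yset S, g y = ∏ b ∈ S.filter (fun b => b - 1 ∉ S), g (b - 1) := by
  refine prod_image fun p hp q hq hpq => ?_
  have hp0 : p ≠ 0 := ne_of_mem_of_not_mem (mem_filter.1 hp).1 hS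
  have hq0 : q ≠ 0 := ne_of_mem_of_not_mem (mem_filter.1 hq).1 hS
  omega

lemma prod_filter_pred_mem (hS : 0 ∉ S) (g : ℕ → M) :
    ∏ b ∈ S.filter (fun b => b - 1 ∈ S), g (b - 1) = ∏ c ∈ S.filter (fun c => c + 1 ∈ S), g c := by
  refine prod_nbij' (· - 1) (· + 1) (fun b hb => ?_) (fun c hc => ?_) (fun b hb => ?_)
    (fun c _ => rfl) (fun _ _ => rfl)
  · obtain ⟨hbS, hb1⟩ := mem_filter.1 hb
    have hb0 : b ≠ 0 := ne_of_mem_of_not_mem hbS hS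
    exact mem_filter.2 ⟨hb1, by rwa [Nat.sub_add_cancel (Nat.pos_of_ne_zero hb0)]⟩
  · obtain ⟨hcS, hc1⟩ := mem_filter.1 hc
    exact mem_filter.2 ⟨hc1, by simpa using hcS⟩
  · have hb0 : b ≠ 0 := ne_of_mem_of_not_mem (mem_filter.1 hb).1 hS
    omega

/-- Each part `b` either contributes `b - 1` to `Y(λ)` or is preceded by the part `b - 1`, and
either lies in `X'(λ)` or is followed by the part `b + 1`. -/
lemma prod_Xset_erase_zero_mul_prod_pred (hS : 0 ∉ S) (g : ℕ → M) :
    (∏ x ∈ (Xset S).erase 0, g x) * ∏ b ∈ S, g (b - 1) = (∏ b ∈ S, g b) * ∏ y ∈ Yset S, g y := by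
  rw [Xset_erase_zero hS, prod_Yset hS, ← prod_filter_mul_prod_filter_not S (fun b => b - 1 ∈ S),
    prod_filter_pred_mem hS, ← prod_filter_not_mul_prod_filter S (fun c => c + 1 ∈ S)]
  ac_rfl

end Contents

section ThetaUp

variable {S : Finset ℕ}

lemma thetaUp_zero_eq (hS : 0 ∉ S) : thetaUp S 0 = ∏ b ∈ S, (cc (b - 1) / cc b) := by
  have hX : ∏ x ∈ (Xset S).erase 0, cc x ≠ 0 :=
    prod_ne_zero_iff.2 fun x hx => cc_ne_zero (ne_of_mem_erase hx)
  have hS' : ∏ b ∈ S, cc b ≠ 0 :=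
    prod_ne_zero_iff.2 fun b hb => cc_ne_zero (ne_of_mem_of_not_mem hb hS)
  rw [thetaUp, if_pos rfl, prod_div_distrib, div_eq_div_iff hX hS']
  linear_combination (prod_Xset_erase_zero_mul_prod_pred hS cc).symm

lemma thetaUp_eq_of_mem (hS : 0 ∉ S) {a : ℕ} (ha : a ∈ S) (ha1 : a + 1 ∉ S) :
    thetaUp S a = 2 / (a + 1) * ∏ b ∈ S.erase a, ((cc a - cc (b - 1)) / (cc a - cc b)) := by
  have ha0 : a ≠ 0 := ne_of_mem_of_not_mem ha hS
  have haX : a ∈ (Xset S).erase 0 := by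
    rw [Xset_erase_zero hS]
    exact mem_filter.2 ⟨ha, ha1⟩
  set f : ℕ → ℝ := fun c => cc a - cc c
  -- The factor `f a = 0` occurs on both sides of the interlacing identity; replace it by `1`.
  have key := prod_Xset_erase_zero_mul_prod_pred hS (Function.update f a 1)
  rw [prod_update_of_mem haX, prod_update_of_mem ha, prod_update_of_notMem
    (fun h => notMem_of_mem_Yset h ha), prod_congr rfl fun b hb =>
      Function.update_of_ne (fun h => ha1 (by rwa [← h, Nat.sub_add_cancel
        (Nat.pos_of_ne_zero (ne_of_mem_of_not_mem hb hS))])) 1 f,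
    ← mul_prod_erase S _ ha, sdiff_singleton_eq_erase, sdiff_singleton_eq_erase] at key
  have hf {s : Finset ℕ} (hs : a ∉ s) : ∏ c ∈ s, f c ≠ 0 :=
    prod_ne_zero_iff.2 fun c hc => cc_sub_cc_ne_zero (ne_of_mem_of_not_mem hc hs).symm
  have hXa := hf (notMem_erase a ((Xset S).erase 0))
  have hSa := hf (notMem_erase a S)
  simp only [f, one_mul, cc_sub_cc_pred ha0] at key hXa hSa
  rw [thetaUp, if_neg ha0, prod_div_distrib]
  generalize ∏ c ∈ ((Xset S).erase 0).erase a, (cc a - cc c) = PX at key hXa ⊢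
  generalize ∏ c ∈ S.erase a, (cc a - cc c) = PS at key hSa ⊢
  generalize ∏ c ∈ Yset S, (cc a - cc c) = PY at key ⊢
  generalize ∏ b ∈ S.erase a, (cc a - cc (b - 1)) = PB at key ⊢
  have hcc : cc a = a * (a + 1) := rfl
  rw [hcc]
  field_simp
  linear_combination -key

end ThetaUp

noncomputable def pairFactor (a b : ℕ) : ℝ := |(a : ℝ) - b| / (a + b)

lemma pairFactor_comm (a b : ℕ) : pairFactor a b = pairFactor b a := by
  rw [pairFactor, pairFactor, abs_sub_comm, add_comm]

lemma pairFactor_of_lt {a b : ℕ} (h : b < a) : pairFactor a b = ((a : ℝ) - b) / (a + b) := by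
  rw [pairFactor, abs_of_pos (sub_pos.2 (Nat.cast_lt.2 h))]

lemma pairFactor_zero_left {b : ℕ} (hb : b ≠ 0) : pairFactor 0 b = 1 := by
  have : (0 : ℝ) < b := Nat.cast_pos.2 (Nat.pos_of_ne_zero hb)
  rw [pairFactor_comm, pairFactor_of_lt (Nat.pos_of_ne_zero hb)]
  simp [this.ne']

lemma pairFactor_succ_left_mul {a b : ℕ} (hb : b ≠ 0) (hba : b ≠ a) (hba1 : b ≠ a + 1) :
    pairFactor (a + 1) b * (cc a - cc b) = pairFactor a b * (cc a - cc (b - 1)) := by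
  unfold cc
  rw [Nat.cast_pred (Nat.pos_of_ne_zero hb)]
  rcases (Nat.lt_or_gt_of_ne hba).imp_right (fun h => lt_of_le_of_ne h (Ne.symm hba1)) with h | h
  · rw [pairFactor_of_lt (h.trans (Nat.lt_succ_self a)), pairFactor_of_lt h]
    push_cast
    field_simp
    ring
  · rw [pairFactor_comm, pairFactor_of_lt h, pairFactor_comm, pairFactor_of_lt (Nat.lt_of_succ_lt h)]
    push_cast
    field_simp
    ring

noncomputable def pairProd (S : Finset ℕ) : ℝ :=
  ∏ p ∈ S.offDiag.filter (fun p => p.2 < p.1), (((p.1 : ℝ) - p.2) / ((p.1 : ℝ) + p.2))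

lemma pairProd_eq_prod_ite (S : Finset ℕ) :
    pairProd S = ∏ p ∈ S.offDiag, if p.2 < p.1 then pairFactor p.1 p.2 else 1 := by
  rw [pairProd, prod_filter]
  exact prod_congr rfl fun p _ => by split_ifs with h <;> simp [pairFactor_of_lt, h]

lemma pairProd_insert {E : Finset ℕ} {a : ℕ} (ha : a ∉ E) :
    pairProd (insert a E) = pairProd E * ∏ b ∈ E, pairFactor a b := by
  have hdisj₁ : Disjoint E.offDiag ({a} ×ˢ E) := by
    simp only [disjoint_left, mem_offDiag, mem_product, mem_singleton]
    rintro ⟨x, y⟩ ⟨hx, -⟩ ⟨rfl, -⟩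
    exact ha hx
  have hdisj₂ : Disjoint (E.offDiag ∪ {a} ×ˢ E) (E ×ˢ {a}) := by
    simp only [disjoint_left, mem_union, mem_offDiag, mem_product, mem_singleton]
    rintro ⟨x, y⟩ (⟨-, hy, -⟩ | ⟨-, hy⟩) ⟨-, rfl⟩ <;> exact ha hy
  rw [pairProd_eq_prod_ite, offDiag_insert ha, prod_union hdisj₂, prod_union hdisj₁,
    ← pairProd_eq_prod_ite, prod_product, prod_product, prod_singleton, mul_assoc,
    ← prod_mul_distrib]
  refine congrArg _ (prod_congr rfl fun b hb => ?_)
  have hba : b ≠ a := ne_of_mem_of_not_mem hb ha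
  rw [prod_singleton]
  rcases hba.lt_or_gt with h | h
  · simp [h, h.not_gt]
  · simp [h, h.not_gt, pairFactor_comm a b]

lemma pairProd_pos (S : Finset ℕ) : 0 < pairProd S :=
  prod_pos fun p hp => by
    have hlt : (p.2 : ℝ) < p.1 := Nat.cast_lt.2 (mem_filter.1 hp).2
    exact div_pos (by linarith) (by linarith [(Nat.cast_nonneg p.2 : (0 : ℝ) ≤ p.2)])

lemma hfun_eq_pairProd (S : Finset ℕ) :
    hfun S = 2 ^ (wt S - len S) * (wt S).factorial / (∏ a ∈ S, (a.factorial : ℝ)) * pairProd S :=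
  rfl

lemma hfun_pos (S : Finset ℕ) : 0 < hfun S := by
  have := pairProd_pos S
  rw [hfun_eq_pairProd]
  positivity

lemma len_le_wt {S : Finset ℕ} (hS : 0 ∉ S) : len S ≤ wt S := by
  rw [len, card_eq_sum_ones]
  exact sum_le_sum fun a ha => Nat.pos_of_ne_zero (ne_of_mem_of_not_mem ha hS)

lemma hfun_insert {E : Finset ℕ} (hE : 0 ∉ E) {a : ℕ} (ha : a ∉ E) (ha0 : a ≠ 0) :
    hfun (insert a E) =
      hfun E * 2 ^ (a - 1) * ((wt E + a).choose a) * ∏ b ∈ E, pairFactor a b := by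
  have hwt : wt (insert a E) = wt E + a := by rw [wt, sum_insert ha, add_comm]; rfl
  have hlen : len (insert a E) = len E + 1 := card_insert_of_notMem ha
  have hexp : wt E + a - (len E + 1) = (wt E - len E) + (a - 1) := by
    have := len_le_wt hE
    omega
  have hfact : ((wt E + a).factorial : ℝ) = (wt E + a).choose a * (wt E).factorial * a.factorial := by
    exact_mod_cast (Nat.add_choose_mul_factorial_mul_factorial _ _).symm
  rw [hfun_eq_pairProd, hfun_eq_pairProd, hwt, hlen, hexp, pairProd_insert ha, prod_insert ha,
    hfact, pow_add]
  field_simp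

section PlancherelUp

variable {S : Finset ℕ}

lemma thetaUp_zero_mul_hfun (hS : 0 ∉ S) (h1 : 1 ∉ S) :
    thetaUp S 0 * (hfun S * (wt S + 1)) = hfun (addBox S 0) := by
  have hfactor : ∀ b ∈ S, pairFactor 1 b = cc (b - 1) / cc b := fun b hb => by
    have hb0 := ne_of_mem_of_not_mem hb hS
    have := pairFactor_succ_left_mul hb0 hb0 (ne_of_mem_of_not_mem hb h1)
    rw [pairFactor_zero_left hb0, cc_zero] at this
    rw [eq_div_iff (cc_ne_zero hb0)]
    linear_combination -this
  rw [thetaUp_zero_eq hS, addBox, if_pos rfl, hfun_insert hS h1 one_ne_zero, prod_congr rfl hfactor]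
  simp only [Nat.choose_one_right, Nat.cast_add, Nat.cast_one]
  ring

lemma thetaUp_mul_hfun_of_mem (hS : 0 ∉ S) {a : ℕ} (ha : a ∈ S) (ha1 : a + 1 ∉ S) :
    thetaUp S a * (hfun S * (wt S + 1)) = hfun (addBox S a) := by
  have ha0 : a ≠ 0 := ne_of_mem_of_not_mem ha hS
  have hE : 0 ∉ S.erase a := fun h => hS (mem_of_mem_erase h)
  have hwt : wt S = wt (S.erase a) + a := (sum_erase_add S id ha).symm
  have hhS := hfun_insert hE (notMem_erase a S) ha0
  rw [insert_erase ha] at hhS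
  have hfactor : ∀ b ∈ S.erase a, pairFactor (a + 1) b =
      pairFactor a b * ((cc a - cc (b - 1)) / (cc a - cc b)) := fun b hb => by
    have hba := ne_of_mem_erase hb
    rw [mul_div_assoc', eq_div_iff (cc_sub_cc_ne_zero hba.symm)]
    exact pairFactor_succ_left_mul (ne_of_mem_of_not_mem (mem_of_mem_erase hb) hS) hba
      (ne_of_mem_of_not_mem (mem_of_mem_erase hb) ha1)
  have hchoose : ((wt (S.erase a) + a + 1) : ℝ) * (wt (S.erase a) + a).choose a =
      (wt (S.erase a) + a + 1).choose (a + 1) * (a + 1) := by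
    exact_mod_cast Nat.add_one_mul_choose_eq (wt (S.erase a) + a) a
  have hpow : (2 : ℝ) ^ (a + 1 - 1) = 2 * 2 ^ (a - 1) := by
    rw [Nat.add_sub_cancel, ← pow_succ', Nat.sub_add_cancel (Nat.pos_of_ne_zero ha0)]
  rw [thetaUp_eq_of_mem hS ha ha1, addBox, if_neg ha0, hwt, hhS, hfun_insert hE
    (fun h => ha1 (mem_of_mem_erase h)) (Nat.succ_ne_zero a), prod_congr rfl hfactor,
    prod_mul_distrib, hpow]
  generalize ∏ b ∈ S.erase a, (cc a - cc (b - 1)) / (cc a - cc b) = R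
  generalize ∏ b ∈ S.erase a, pairFactor a b = P
  push_cast
  field_simp
  linear_combination R * hfun (S.erase a) * P * hchoose

end PlancherelUp

/-- **Proposition 1.10.** For every strict partition `λ` of weight `n` and every
`x̂ ∈ X(λ)`, the partial fraction coefficient `θ↑_{x̂}(λ)` equals the Plancherel up
transition probability `p∞↑(λ, λ+□(x̂)) = h(λ+□(x̂))/(h(λ)(n+1))` of the Schur graph. -/
theorem thetaUp_eq_plancherel_up (S : Finset ℕ) (hS : IsStrictPartition S)
    (n : ℕ) (hn : wt S = n) (xh : ℕ) (hx : xh ∈ Xset S) :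
    thetaUp S xh = hfun (addBox S xh) / (hfun S * ((n : ℝ) + 1)) := by
  subst hn
  refine eq_div_of_mul_eq (mul_pos (hfun_pos S) (by positivity)).ne' ?_
  obtain ⟨ha, ha1⟩ | ⟨rfl, h1⟩ := mem_Xset.1 hx
  · exact thetaUp_mul_hfun_of_mem hS ha ha1
  · exact thetaUp_zero_mul_hfun hS h1
end

section
/- For every α ∈ (0, ∞), every strict partition λ of weight n, and every x ∈ X(λ), setting ν = λ+□(x), the up transition function of the multiplicative coherent system satisfies the explicit formula: (M_{n+1}^α(ν) / M_n^α(λ)) · p↓(ν, λ) = ((x(x+1)+α)/(2n+α)) · h(ν)/(h(λ)·(n+1)). -/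
open Finset

/-!
Adding a box of content `x` to `λ` multiplies the content product `∏ (c(c+1)+α)` by
`x(x+1)+α`, `Z_α(n)` by `α+2n` and `n!` by `n+1`, while `2^{ℓ}` grows by `2/κ(λ,ν)`:
a new part `1` (the case `x = 0`) raises the length, any other addable box does not.
Hence `M_{n+1}^α(ν)/M_n^α(λ)` is `(h(ν)/h(λ))²` times explicit factors, and one factor
`h(ν)/h(λ)` together with `κ` cancels against `p↓(ν,λ)`.
-/

noncomputable def contentProd (α : ℝ) (S : Finset ℕ) : ℝ :=
  ∏ p ∈ S, ∏ c ∈ Finset.range p, (cc c + α)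

lemma Mw_eq_contentProd (α : ℝ) (n : ℕ) (S : Finset ℕ) :
    Mw α n S = hfun S ^ 2 * 2 ^ len S / 2 ^ n / (Nat.factorial n : ℝ) * contentProd α S /
      Zfun α n := rfl

lemma cc_nonneg (t : ℕ) : 0 ≤ cc t := by
  unfold cc; positivity

lemma hfun_ne_zero (S : Finset ℕ) : hfun S ≠ 0 := by
  have hfact : ∏ a ∈ S, (Nat.factorial a : ℝ) ≠ 0 :=
    Finset.prod_ne_zero_iff.mpr fun a _ => Nat.cast_ne_zero.mpr a.factorial_ne_zero
  have hquot : ∏ p ∈ S.offDiag.filter (fun p => p.2 < p.1),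
      (((p.1 : ℝ) - p.2) / ((p.1 : ℝ) + p.2)) ≠ 0 := by
    refine Finset.prod_ne_zero_iff.mpr fun p hp => ?_
    have hlt : (p.2 : ℝ) < p.1 := by exact_mod_cast (Finset.mem_filter.mp hp).2
    have hpos : (0 : ℝ) < p.1 + p.2 := by linarith [(Nat.cast_nonneg p.2 : (0 : ℝ) ≤ p.2)]
    exact div_ne_zero (sub_ne_zero.mpr hlt.ne') hpos.ne'
  unfold hfun
  exact mul_ne_zero (div_ne_zero (by positivity) hfact) hquot

lemma Zfun_succ (α : ℝ) (n : ℕ) : Zfun α (n + 1) = Zfun α n * (α + 2 * n) :=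
  Finset.prod_range_succ _ n

lemma Zfun_pos {α : ℝ} (hα : 0 < α) (n : ℕ) : 0 < Zfun α n :=
  Finset.prod_pos fun k _ => by positivity

lemma contentProd_pos {α : ℝ} (hα : 0 < α) (S : Finset ℕ) : 0 < contentProd α S :=
  Finset.prod_pos fun _ _ => Finset.prod_pos fun c _ => add_pos_of_nonneg_of_pos (cc_nonneg c) hα

lemma mem_Xset_iff {S : Finset ℕ} {x : ℕ} :
    x ∈ Xset S ↔ (x ∈ S ∧ x + 1 ∉ S) ∨ (x = 0 ∧ 1 ∉ S) := by
  by_cases h1 : 1 ∈ S <;> simp [Xset, h1, or_comm]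

lemma one_notMem_of_zero_mem_Xset {S : Finset ℕ} (h : 0 ∈ Xset S) : 1 ∉ S :=
  (mem_Xset_iff.mp h).elim And.right And.right

lemma addBox_zero (S : Finset ℕ) : addBox S 0 = insert 1 S := if_pos rfl

lemma addBox_of_ne_zero (S : Finset ℕ) {x : ℕ} (hx0 : x ≠ 0) :
    addBox S x = insert (x + 1) (S.erase x) := if_neg hx0

lemma contentProd_addBox (α : ℝ) {S : Finset ℕ} {x : ℕ} (hx : x ∈ Xset S) :
    contentProd α (addBox S x) = (cc x + α) * contentProd α S := by
  unfold contentProd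
  rcases eq_or_ne x 0 with rfl | hx0
  · rw [addBox_zero, Finset.prod_insert (one_notMem_of_zero_mem_Xset hx),
      Finset.prod_range_one]
  · obtain ⟨hxS, hx1S⟩ := (mem_Xset_iff.mp hx).resolve_right (fun h => hx0 h.1)
    rw [addBox_of_ne_zero S hx0,
      Finset.prod_insert fun h => hx1S (Finset.mem_of_mem_erase h),
      Finset.prod_range_succ, ← Finset.prod_erase_mul S _ hxS]
    ring

lemma two_pow_len_addBox_mul_kappa {S : Finset ℕ} {x : ℕ} (hx : x ∈ Xset S) :
    (2 : ℝ) ^ len (addBox S x) * (if len (addBox S x) = len S then 2 else 1) =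
      2 * 2 ^ len S := by
  rcases eq_or_ne x 0 with rfl | hx0
  · have hlen : len (addBox S 0) = len S + 1 := by
      rw [addBox_zero, len, len, Finset.card_insert_of_notMem (one_notMem_of_zero_mem_Xset hx)]
    rw [hlen, if_neg (Nat.succ_ne_self _), pow_succ]
    ring
  · obtain ⟨hxS, hx1S⟩ := (mem_Xset_iff.mp hx).resolve_right (fun h => hx0 h.1)
    have hlen : len (addBox S x) = len S := by
      rw [addBox_of_ne_zero S hx0, len, len,
        Finset.card_insert_of_notMem fun h => hx1S (Finset.mem_of_mem_erase h),
        Finset.card_erase_add_one hxS]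
    rw [hlen, if_pos rfl]
    ring

theorem multiplicative_up_transition_general (α : ℝ) (hα : 0 < α)
    (S : Finset ℕ) (n : ℕ)
    (x : ℕ) (hx : x ∈ Xset S) :
    (Mw α (n + 1) (addBox S x) / Mw α n S) *
        ((hfun S / hfun (addBox S x)) *
          (if len (addBox S x) = len S then (2 : ℝ) else 1)) =
      ((cc x + α) / (2 * (n : ℝ) + α)) * (hfun (addBox S x) / (hfun S * ((n : ℝ) + 1))) := by
  have hS := hfun_ne_zero S
  have hν := hfun_ne_zero (addBox S x)
  have hZ := (Zfun_pos hα n).ne'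
  have hP := (contentProd_pos hα S).ne'
  have hκ := two_pow_len_addBox_mul_kappa hx
  have hn : (2 * (n : ℝ) + α) ≠ 0 := by positivity
  rw [Mw_eq_contentProd, Mw_eq_contentProd, contentProd_addBox α hx, Zfun_succ,
    Nat.factorial_succ, Nat.cast_mul, Nat.cast_succ]
  field_simp
  linear_combination 2 ^ n * (cc x + α) * (2 * (n : ℝ) + α) * hκ

/-- **The explicit formula (7) for the up transition function of the multiplicative
coherent system.** For `α ∈ (0,∞)`, a strict partition `λ` of weight `n` and `x ∈ X(λ)`,
with `ν = λ+□(x)`: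
`p_α↑(λ,ν) = (M_{n+1}^α(ν)/M_n^α(λ)) ⬝ p↓(ν,λ)
           = ((x(x+1)+α)/(2n+α)) ⬝ h(ν)/(h(λ)(n+1))`,
where `p↓(ν,λ) = (h(λ)/h(ν)) κ(λ,ν)` with `κ(λ,ν) = 2` if `ℓ(ν)=ℓ(λ)` and `1` otherwise. -/
theorem multiplicative_up_transition (α : ℝ) (hα : 0 < α)
    (S : Finset ℕ) (hS : IsStrictPartition S) (n : ℕ) (hn : wt S = n)
    (x : ℕ) (hx : x ∈ Xset S) :
    (Mw α (n + 1) (addBox S x) / Mw α n S) *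
        ((hfun S / hfun (addBox S x)) *
          (if len (addBox S x) = len S then (2 : ℝ) else 1)) =
      ((cc x + α) / (2 * (n : ℝ) + α)) * (hfun (addBox S x) / (hfun S * ((n : ℝ) + 1))) :=
  multiplicative_up_transition_general α hα S n x hx
end

section
/- In the ring (ℝ[ξ])[[t]] of formal power series in t with polynomial coefficients in ξ, define B(t) = ((1−ξt)² − 2t(1+ξt)) · ((1−ξt)²)^{−1} (the series (1−ξt)² has constant term 1 and hence is invertible), and let A(t) = B(t)^{−1} (B(t) has constant term 1). Write B(t) = Σ_{s≥0} b_s(ξ) t^s and A(t) = Σ_{s≥0} a_s(ξ) t^s with a_s, b_s ∈ ℝ[ξ]. Then a_0(ξ) = b_0(ξ) = 1; for every s ≥ 1, b_s(ξ) = −2(2s−1) ξ^{s−1}; and for every s ≥ 1, a_s(ξ) has degree s−1 in ξ with leading coefficient 2(2s−1), i.e. a_s(ξ) − 2(2s−1)ξ^{s−1} has degree at most s−2. -/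
/-!
Clearing the denominator gives `B = 1 + t H` with `H = -2 (1 + ξt) / (1 - ξt)²`, whose
coefficients are read off from `(1 - ξt)⁻² = ∑ (n + 1) ξⁿ tⁿ`. For `A`, the key point is that the
power series whose `tⁿ`-coefficient has `ξ`-degree at most `n` form a subring, closed under
inverting `1 + t g`. Writing `A = 1 + t F`, the identity `(1 + t F)(1 + t H) = 1` gives
`F + H = -t F H`, so the coefficients of `F` agree with those of `-H` up to lower degree terms.
-/

open scoped Polynomial

namespace PowerSeries

variable {R : Type*} [CommRing R]

theorem mk_succ_mul_pow_mul_one_sub_C_mul_X_sq (a : R) :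
    (mk fun n => ((n : R) + 1) * a ^ n) * (1 - C a * X) ^ 2 = 1 := by
  have h := congrArg (rescale a) (mk_add_choose_mul_one_sub_pow_eq_one (S := R) (d := 1))
  rw [map_mul, map_pow, map_sub, map_one, rescale_X] at h
  convert h using 2
  ext n
  simp [coeff_rescale, add_comm, mul_comm]

theorem eq_one_add_X_mul_mk_of_mul_one_sub_C_mul_X_sq {a : R} {B : R⟦X⟧}
    (hB : B * (1 - C a * X) ^ 2 = (1 - C a * X) ^ 2 - 2 * X * (1 + C a * X)) :
    B = 1 + X * mk fun n => -2 * (2 * (n : R) + 1) * a ^ n := by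
  set S : R⟦X⟧ := mk fun n => ((n : R) + 1) * a ^ n
  have hS := mk_succ_mul_pow_mul_one_sub_C_mul_X_sq a
  have hBS : B = 1 + X * (-2 * ((1 + C a * X) * S)) := by
    linear_combination S * hB - (B - 1) * hS
  rw [hBS]
  congr 2
  ext n
  rw [← map_ofNat C 2, ← map_neg, coeff_C_mul, add_mul, one_mul, map_add, mul_assoc,
    coeff_C_mul]
  cases n with
  | zero => simp [S]
  | succ n => simp [S, coeff_succ_X_mul]; ring

/-- Equivalently, `f` is a power series in `ξ t` and `t`. -/
def CoeffDegreeLE (f : R[X]⟦X⟧) : Prop :=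
  ∀ n, (coeff n f).degree ≤ n

theorem degree_coeff_mul_le {f g : R[X]⟦X⟧} {n : ℕ} (hf : ∀ i ≤ n, (coeff i f).degree ≤ i)
    (hg : ∀ j ≤ n, (coeff j g).degree ≤ j) : (coeff n (f * g)).degree ≤ n := by
  rw [coeff_mul]
  refine (Polynomial.degree_sum_le _ _).trans (Finset.sup_le fun p hp => ?_)
  have hpn : p.1 + p.2 = n := Finset.HasAntidiagonal.mem_antidiagonal.1 hp
  calc (coeff p.1 f * coeff p.2 g).degree
      ≤ (coeff p.1 f).degree + (coeff p.2 g).degree := Polynomial.degree_mul_le _ _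
    _ ≤ (p.1 : WithBot ℕ) + p.2 := add_le_add (hf _ (by omega)) (hg _ (by omega))
    _ = n := by rw [← hpn, Nat.cast_add]

namespace CoeffDegreeLE

theorem mul {f g : R[X]⟦X⟧} (hf : CoeffDegreeLE f) (hg : CoeffDegreeLE g) :
    CoeffDegreeLE (f * g) :=
  fun _ => degree_coeff_mul_le (fun i _ => hf i) (fun j _ => hg j)

theorem neg {f : R[X]⟦X⟧} (hf : CoeffDegreeLE f) : CoeffDegreeLE (-f) :=
  fun n => by simpa only [map_neg, Polynomial.degree_neg] using hf n

theorem of_mul_one_add_X_mul_eq_one {f g : R[X]⟦X⟧} (hg : CoeffDegreeLE g)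
    (h : f * (1 + X * g) = 1) : CoeffDegreeLE f := by
  have hf : f = 1 - X * (g * f) := by linear_combination h
  intro n
  induction n using Nat.strong_induction_on with
  | _ n ih =>
    rw [hf]
    cases n with
    | zero => simp
    | succ m =>
      rw [map_sub, coeff_succ_X_mul, coeff_one, if_neg m.succ_ne_zero, zero_sub,
        Polynomial.degree_neg]
      exact (degree_coeff_mul_le (fun i _ => hg i) (fun j hj => ih j (by omega))).trans
        (by exact_mod_cast m.le_succ)

end CoeffDegreeLE

theorem degree_coeff_succ_add_coeff_lt {A g : R[X]⟦X⟧} (hg : CoeffDegreeLE g)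
    (h : A * (1 + X * g) = 1) (n : ℕ) : (coeff (n + 1) A + coeff n g).degree < n := by
  set f := -(g * A)
  have hf : CoeffDegreeLE f := (hg.mul (CoeffDegreeLE.of_mul_one_add_X_mul_eq_one hg h)).neg
  have hA : A = 1 + X * f := by linear_combination h
  have hfg : f + g = -(X * (g * f)) := by linear_combination (-g) * hA
  rw [hA, map_add, coeff_succ_X_mul, coeff_one, if_neg n.succ_ne_zero, zero_add, ← map_add, hfg,
    map_neg, Polynomial.degree_neg]
  cases n with
  | zero => simp
  | succ m =>
    rw [coeff_succ_X_mul]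
    exact (hg.mul hf m).trans_lt (by exact_mod_cast m.lt_succ_self)

end PowerSeries

open PowerSeries

/-- **Lemma 4.5.** In `(ℝ[ξ])[[t]]`, let `B(t)` be the power series with
`B(t) ⬝ (1−ξt)² = (1−ξt)² − 2t(1+ξt)` (i.e. `B(t) = ((1−ξt)² − 2t(1+ξt))/(1−ξt)²`),
and let `A(t) = B(t)⁻¹` (i.e. `A(t) B(t) = 1`). Writing `A(t) = ∑ a_s(ξ) t^s`,
`B(t) = ∑ b_s(ξ) t^s`, we have `a_0 = b_0 = 1`; `b_s(ξ) = −2(2s−1) ξ^{s−1}` for `s ≥ 1`;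
and for `s ≥ 1`, `a_s(ξ) − 2(2s−1)ξ^{s−1}` has degree at most `s−2`
(so `a_s` has degree `s−1` with leading coefficient `2(2s−1)`). -/
theorem expansion_coefficients (A B : PowerSeries (Polynomial ℝ))
    (hB : B * (1 - PowerSeries.C Polynomial.X * PowerSeries.X) ^ 2 =
      (1 - PowerSeries.C Polynomial.X * PowerSeries.X) ^ 2 -
        2 * PowerSeries.X * (1 + PowerSeries.C Polynomial.X * PowerSeries.X))
    (hA : A * B = 1) :
    PowerSeries.coeff 0 A = 1 ∧
    PowerSeries.coeff 0 B = 1 ∧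
    (∀ s : ℕ, 1 ≤ s →
      PowerSeries.coeff s B =
        Polynomial.C (-2 * (2 * (s : ℝ) - 1)) * Polynomial.X ^ (s - 1)) ∧
    (∀ s : ℕ, 1 ≤ s →
      Polynomial.degree
          (PowerSeries.coeff s A -
            Polynomial.C (2 * (2 * (s : ℝ) - 1)) * Polynomial.X ^ (s - 1)) <
        ((s - 1 : ℕ) : WithBot ℕ)) := by
  set H : ℝ[X]⟦X⟧ := mk fun n => -2 * (2 * (n : ℝ[X]) + 1) * Polynomial.X ^ n
  have hBH : B = 1 + X * H := eq_one_add_X_mul_mk_of_mul_one_sub_C_mul_X_sq hB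
  have hAH : A * (1 + X * H) = 1 := hBH ▸ hA
  have hH (n : ℕ) :
      coeff n H = Polynomial.C (-2 * (2 * ((n + 1 : ℕ) : ℝ) - 1)) * Polynomial.X ^ n := by
    simp only [H, coeff_mk, map_mul, map_sub, map_neg, map_ofNat, map_natCast, map_one]
    push_cast; ring
  have hHdeg : CoeffDegreeLE H := fun n => hH n ▸ Polynomial.degree_C_mul_X_pow_le n _
  refine ⟨by simpa using congrArg (coeff 0) hAH, by simp [hBH], ?_, ?_⟩
  all_goals
    intro s hs
    obtain ⟨n, rfl⟩ := Nat.exists_eq_add_of_le' hs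
    rw [Nat.add_sub_cancel]
  · rw [hBH, map_add, coeff_succ_X_mul, coeff_one, if_neg n.succ_ne_zero, zero_add, hH]
  · have h := degree_coeff_succ_add_coeff_lt hHdeg hAH n
    rwa [hH, neg_mul, map_neg, neg_mul, ← sub_eq_add_neg] at h
end

section
/- The moment coordinates separate the points of Ω₊, and so does any infinite subcollection of them: if x, y ∈ Ω₊ and the set of integers k ≥ 2 such that Σ_{i=1}^∞ x_i^k = Σ_{i=1}^∞ y_i^k is infinite, then x = y. In particular, the even moment coordinates q_{2k}(x) = Σ_i x_i^{2k+1}, k = 1, 2, …, separate the points of Ω₊. -/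
/-!
If `x ≠ y`, let `n` be the first index where they differ, say `y n < x n`. Dropping the common
first `n` terms keeps the moments equal. For the tails, `∑ x_{i+n}^{k+1} ≥ x_n^{k+1}`, while
monotonicity gives `∑ y_{i+n}^{k+1} ≤ y_n^k ∑ y_{i+n}`; since `y_n < x_n` the first bound
eventually beats the second, so the moments agree for only finitely many `k`.
-/

open Filter

lemma eventually_mul_pow_lt_pow_succ {a b : ℝ} (C : ℝ) (hb : 0 ≤ b) (hab : b < a) :
    ∀ᶠ k : ℕ in atTop, C * b ^ k < a ^ (k + 1) := by
  have ha : 0 < a := hb.trans_lt hab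
  filter_upwards [((isLittleO_pow_pow_of_lt_left hb hab).const_mul_left C).def (half_pos ha)]
    with k hk
  rw [Real.norm_of_nonneg (pow_pos ha k).le] at hk
  calc C * b ^ k ≤ ‖C * b ^ k‖ := Real.le_norm_self _
    _ ≤ a / 2 * a ^ k := hk
    _ < a ^ (k + 1) := by rw [pow_succ']; gcongr; linarith

section AntitoneNonneg

variable {x : ℕ → ℝ}

lemma pow_succ_le_pow_mul_self (hx0 : ∀ i, 0 ≤ x i) (hxa : Antitone x) (k i : ℕ) :
    x i ^ (k + 1) ≤ x 0 ^ k * x i := by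
  rw [pow_succ]
  exact mul_le_mul_of_nonneg_right (pow_le_pow_left₀ (hx0 i) (hxa (Nat.zero_le i)) k) (hx0 i)

lemma summable_pow_succ (hx0 : ∀ i, 0 ≤ x i) (hxa : Antitone x) (hxs : Summable x) (k : ℕ) :
    Summable fun i ↦ x i ^ (k + 1) :=
  (hxs.mul_left (x 0 ^ k)).of_nonneg_of_le (fun i ↦ pow_nonneg (hx0 i) _)
    (pow_succ_le_pow_mul_self hx0 hxa k)

lemma tsum_pow_succ_le (hx0 : ∀ i, 0 ≤ x i) (hxa : Antitone x) (hxs : Summable x) (k : ℕ) :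
    ∑' i, x i ^ (k + 1) ≤ x 0 ^ k * ∑' i, x i := by
  rw [← tsum_mul_left]
  exact (summable_pow_succ hx0 hxa hxs k).tsum_le_tsum (pow_succ_le_pow_mul_self hx0 hxa k)
    (hxs.mul_left _)

lemma pow_succ_le_tsum_pow_succ (hx0 : ∀ i, 0 ≤ x i) (hxa : Antitone x) (hxs : Summable x)
    (k : ℕ) : x 0 ^ (k + 1) ≤ ∑' i, x i ^ (k + 1) :=
  (summable_pow_succ hx0 hxa hxs k).le_tsum 0 fun i _ ↦ pow_nonneg (hx0 i) _

end AntitoneNonneg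

lemma eventually_tsum_pow_lt_tsum_pow {x y : ℕ → ℝ}
    (hx0 : ∀ i, 0 ≤ x i) (hxa : Antitone x) (hxs : Summable x)
    (hy0 : ∀ i, 0 ≤ y i) (hya : Antitone y) (hys : Summable y) (hlt : y 0 < x 0) :
    ∀ᶠ k : ℕ in atTop, ∑' i, y i ^ k < ∑' i, x i ^ k := by
  have hsucc : ∀ᶠ k : ℕ in atTop, ∑' i, y i ^ (k + 1) < ∑' i, x i ^ (k + 1) := by
    filter_upwards [eventually_mul_pow_lt_pow_succ (∑' i, y i) (hy0 0) hlt] with k hk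
    calc ∑' i, y i ^ (k + 1) ≤ y 0 ^ k * ∑' i, y i := tsum_pow_succ_le hy0 hya hys k
      _ = (∑' i, y i) * y 0 ^ k := mul_comm _ _
      _ < x 0 ^ (k + 1) := hk
      _ ≤ ∑' i, x i ^ (k + 1) := pow_succ_le_tsum_pow_succ hx0 hxa hxs k
  filter_upwards [(tendsto_sub_atTop_nat 1).eventually hsucc, eventually_ge_atTop 1] with k hk hk1
  rwa [Nat.sub_add_cancel hk1] at hk

lemma tsum_nat_add_eq_of_tsum_eq {G : Type*} [AddCommGroup G] [TopologicalSpace G]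
    [IsTopologicalAddGroup G] [T2Space G] {f g : ℕ → G} (hf : Summable f) (hg : Summable g)
    {n : ℕ} (hfg : ∀ i < n, f i = g i) (h : ∑' i, f i = ∑' i, g i) :
    ∑' i, f (i + n) = ∑' i, g (i + n) := by
  have hprefix : ∑ i ∈ Finset.range n, f i = ∑ i ∈ Finset.range n, g i :=
    Finset.sum_congr rfl fun i hi ↦ hfg i (Finset.mem_range.1 hi)
  rw [← hf.sum_add_tsum_nat_add n, ← hg.sum_add_tsum_nat_add n, hprefix] at h
  exact add_left_cancel h

lemma le_of_frequently_tsum_pow_eq {x y : ℕ → ℝ}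
    (hx0 : ∀ i, 0 ≤ x i) (hxa : Antitone x) (hxs : Summable x)
    (hy0 : ∀ i, 0 ≤ y i) (hya : Antitone y) (hys : Summable y)
    (hfreq : ∃ᶠ k in atTop, ∑' i, x i ^ k = ∑' i, y i ^ k) {n : ℕ} (hprefix : ∀ i < n, x i = y i) :
    x n ≤ y n := by
  by_contra! hlt
  have htail := eventually_tsum_pow_lt_tsum_pow (x := fun i ↦ x (i + n)) (y := fun i ↦ y (i + n))
    (fun i ↦ hx0 _) (fun _ _ h ↦ hxa (Nat.add_le_add_right h n)) ((summable_nat_add_iff n).2 hxs)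
    (fun i ↦ hy0 _) (fun _ _ h ↦ hya (Nat.add_le_add_right h n)) ((summable_nat_add_iff n).2 hys)
    (by simpa using hlt)
  obtain ⟨k, heq, hk, hk0⟩ := (hfreq.and_eventually (htail.and (eventually_ne_atTop 0))).exists
  obtain ⟨m, rfl⟩ := Nat.exists_eq_succ_of_ne_zero hk0
  have htail_eq := tsum_nat_add_eq_of_tsum_eq (summable_pow_succ hx0 hxa hxs m)
    (summable_pow_succ hy0 hya hys m) (fun i hi ↦ by rw [hprefix i hi]) heq
  exact hk.ne htail_eq.symm

theorem moment_coordinates_separate_general (x y : ℕ → ℝ)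
    (hx0 : ∀ i, 0 ≤ x i) (hxmono : ∀ i, x (i + 1) ≤ x i)
    (hxsum : ∃ s ≤ (1 : ℝ), HasSum x s)
    (hy0 : ∀ i, 0 ≤ y i) (hymono : ∀ i, y (i + 1) ≤ y i)
    (hysum : ∃ s ≤ (1 : ℝ), HasSum y s)
    (hinf : {k : ℕ | 2 ≤ k ∧ ∑' i, x i ^ k = ∑' i, y i ^ k}.Infinite) :
    x = y := by
  obtain ⟨_, -, hxs⟩ := hxsum
  obtain ⟨_, -, hys⟩ := hysum
  have hxa : Antitone x := antitone_nat_of_succ_le hxmono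
  have hya : Antitone y := antitone_nat_of_succ_le hymono
  have hfreq : ∃ᶠ k in atTop, ∑' i, x i ^ k = ∑' i, y i ^ k :=
    Nat.frequently_atTop_iff_infinite.2 (hinf.mono fun _ hk ↦ hk.2)
  funext n
  induction n using Nat.strong_induction_on with
  | _ n ih =>
    exact le_antisymm
      (le_of_frequently_tsum_pow_eq hx0 hxa hxs.summable hy0 hya hys.summable hfreq ih)
      (le_of_frequently_tsum_pow_eq hy0 hya hys.summable hx0 hxa hxs.summable
        (hfreq.mono fun _ h ↦ h.symm) fun i hi ↦ (ih i hi).symm)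

/-- **Proposition 6.6.** The moment coordinates `q_k(x) = ∑_i x_i^{k+1}` separate the
points of `Ω₊`, and so does any infinite subcollection of them: if `x, y ∈ Ω₊` and
`∑_i x_i^k = ∑_i y_i^k` for infinitely many integers `k ≥ 2`, then `x = y`.
(In particular the even moment coordinates `q_{2k}` separate the points of `Ω₊`.) -/
theorem moment_coordinates_separate (x y : ℕ → ℝ)
    (hx0 : ∀ i, 0 ≤ x i) (hx1 : x 0 ≤ 1) (hxmono : ∀ i, x (i + 1) ≤ x i)
    (hxsum : ∃ s ≤ (1 : ℝ), HasSum x s)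
    (hy0 : ∀ i, 0 ≤ y i) (hy1 : y 0 ≤ 1) (hymono : ∀ i, y (i + 1) ≤ y i)
    (hysum : ∃ s ≤ (1 : ℝ), HasSum y s)
    (hinf : {k : ℕ | 2 ≤ k ∧ ∑' i, x i ^ k = ∑' i, y i ^ k}.Infinite) :
    x = y :=
  moment_coordinates_separate_general x y hx0 hxmono hxsum hy0 hymono hysum hinf
end
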